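/- Let n ≥ k ≥ 1 and m ≥ k. Then the graded ℝ-algebras ℝ[x_{i,j} : 1 ≤ i ≤ j ≤ 2k]/I_n and ℝ[x_{i,j} : 1 ≤ i ≤ j ≤ 2k]/I_m are equal, where I_n is the real radical of the ideal generated by Q_{i,j} = Σ_{ℓ=1}^{k}(x_{i,2ℓ-1} x_{j,2ℓ} − x_{i,2ℓ} x_{j,2ℓ-1}) (with x_{j,i} := x_{i,j} for j > i); i.e., the defining ideal of the symplectic quotient M_{0,k,n} at zero angular momentum is independent of n for n ≥ k. -/

import Mathlib

/-!
At zero angular momentum the rows `y_i` satisfy `Zᵀ J Z = 0`, where `Z` lists them in symplectic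
pairs and `J` is the standard symplectic matrix. As `J` is invertible, Sylvester's rank inequality
gives `rank Z ≤ k`, so the `y_i` span a space of dimension at most `k ≤ m`, which embeds
isometrically into `ℝᵐ`. A linear map `A` turns `Zᵀ J Z` into `A (Zᵀ J Z) Aᵀ`, so the embedded
configuration still has zero angular momentum, and it has the same Gram matrix. Hence the
zero-momentum configurations in `ℝⁿ` and in `ℝᵐ` have the same Gram matrices.
-/

open Finset

/-- Index of `y_{2ℓ-1}` (0-based) among the `2k` vectors. -/
def oddIdx {k : ℕ} (ℓ : Fin k) : Fin (2*k) := ⟨2*ℓ.val, by have := ℓ.isLt; omega⟩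

/-- Index of `y_{2ℓ}` (0-based) among the `2k` vectors. -/
def evenIdx {k : ℕ} (ℓ : Fin k) : Fin (2*k) := ⟨2*ℓ.val+1, by have := ℓ.isLt; omega⟩

/-- Euclidean inner product on `ℝⁿ`. -/
noncomputable def ip {n : ℕ} (u v : Fin n → ℝ) : ℝ := ∑ α, u α * v α

/-- The quadratic invariant `Q_{i,j} = Σ_ℓ (x_{i,2ℓ-1} x_{j,2ℓ} - x_{i,2ℓ} x_{j,2ℓ-1})`
where `x_{i,j} = ⟨y_i, y_j⟩`. -/
noncomputable def Qinv {k n : ℕ} (y : Fin (2*k) → Fin n → ℝ) (i j : Fin (2*k)) : ℝ :=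
  ∑ ℓ : Fin k, (ip (y i) (y (oddIdx ℓ)) * ip (y j) (y (evenIdx ℓ))
    - ip (y i) (y (evenIdx ℓ)) * ip (y j) (y (oddIdx ℓ)))

/-- The angular momentum component `J_{α,β}`. -/
noncomputable def angJ {k n : ℕ} (y : Fin (2*k) → Fin n → ℝ) (α β : Fin n) : ℝ :=
  ∑ ℓ : Fin k, (y (oddIdx ℓ) α * y (evenIdx ℓ) β - y (oddIdx ℓ) β * y (evenIdx ℓ) α)

open Matrix Module

section IsometricRealization

variable {𝕜 E F : Type*} [RCLike 𝕜] [NormedAddCommGroup E] [InnerProductSpace 𝕜 E]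
  [NormedAddCommGroup F] [InnerProductSpace 𝕜 F]

theorem LinearIsometry.nonempty_of_finrank_le [FiniteDimensional 𝕜 E] [FiniteDimensional 𝕜 F]
    (h : finrank 𝕜 E ≤ finrank 𝕜 F) : Nonempty (E →ₗᵢ[𝕜] F) := by
  let b := stdOrthonormalBasis 𝕜 E
  let c := stdOrthonormalBasis 𝕜 F
  let f : E →ₗ[𝕜] F := b.toBasis.constr 𝕜 (c ∘ Fin.castLE h)
  have hf : Orthonormal 𝕜 (f ∘ b.toBasis) := by
    rw [show f ∘ b.toBasis = c ∘ Fin.castLE h from funext (b.toBasis.constr_basis 𝕜 _)]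
    exact c.orthonormal.comp _ (Fin.castLE_injective h)
  exact ⟨f.isometryOfOrthonormal b.orthonormal hf⟩

theorem Submodule.exists_linearMap_inner_map_map_of_finrank_le (V : Submodule 𝕜 E)
    [FiniteDimensional 𝕜 V] [FiniteDimensional 𝕜 F] (h : finrank 𝕜 V ≤ finrank 𝕜 F) :
    ∃ T : E →ₗ[𝕜] F, ∀ u ∈ V, ∀ v ∈ V, inner 𝕜 (T u) (T v) = inner 𝕜 u v := by
  obtain ⟨ι⟩ := LinearIsometry.nonempty_of_finrank_le h
  refine ⟨ι.toLinearMap ∘ₗ V.orthogonalProjectionOnto.toLinearMap, fun u hu v hv => ?_⟩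
  simp [V.orthogonalProjectionOnto_mem_subspace_eq_self ⟨u, hu⟩,
    V.orthogonalProjectionOnto_mem_subspace_eq_self ⟨v, hv⟩]

end IsometricRealization

lemma ip_eq_inner {n : ℕ} (u v : Fin n → ℝ) :
    ip u v = inner ℝ (WithLp.toLp 2 u) (WithLp.toLp 2 v) := by
  simp [ip, PiLp.inner_apply, mul_comm]

lemma exists_linearMap_ip_map_map {ι : Type*} {n m : ℕ} (y : ι → Fin n → ℝ)
    (h : finrank ℝ (Submodule.span ℝ (Set.range y)) ≤ m) :
    ∃ T : (Fin n → ℝ) →ₗ[ℝ] (Fin m → ℝ), ∀ i j, ip (T (y i)) (T (y j)) = ip (y i) (y j) := by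
  let e (d : ℕ) : EuclideanSpace ℝ (Fin d) ≃ₗ[ℝ] (Fin d → ℝ) := WithLp.linearEquiv 2 ℝ _
  let V := (Submodule.span ℝ (Set.range y)).map
    ((e n).symm : (Fin n → ℝ) →ₗ[ℝ] EuclideanSpace ℝ (Fin n))
  have hV : finrank ℝ V ≤ finrank ℝ (EuclideanSpace ℝ (Fin m)) := by
    rwa [LinearEquiv.finrank_map_eq, finrank_euclideanSpace_fin]
  obtain ⟨T, hT⟩ := V.exists_linearMap_inner_map_map_of_finrank_le hV
  have hyV (i : ι) : (e n).symm (y i) ∈ V :=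
    Submodule.mem_map_of_mem (Submodule.subset_span ⟨i, rfl⟩)
  refine ⟨(e m).toLinearMap ∘ₗ T ∘ₗ (e n).symm.toLinearMap, fun i j => ?_⟩
  simpa [ip_eq_inner, e] using hT _ (hyV i) _ (hyV j)

section AngularMomentum

variable {k n : ℕ}

lemma angJ_swap (y : Fin (2*k) → Fin n → ℝ) (α β : Fin n) : angJ y β α = -angJ y α β := by
  simp only [angJ, ← Finset.sum_neg_distrib, neg_sub, mul_comm]

lemma angJ_eq_zero_of_forall_lt {y : Fin (2*k) → Fin n → ℝ}
    (hy : ∀ α β, α < β → angJ y α β = 0) (α β : Fin n) : angJ y α β = 0 := by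
  rcases lt_trichotomy α β with h | rfl | h
  · exact hy α β h
  · linarith [angJ_swap y α α]
  · rw [angJ_swap, hy β α h, neg_zero]

lemma sum_elim_oddIdx_evenIdx_surjective (k : ℕ) :
    Function.Surjective (Sum.elim oddIdx evenIdx : Fin k ⊕ Fin k → Fin (2*k)) := by
  intro i
  rcases Nat.even_or_odd' i.val with ⟨ℓ, h | h⟩
  · exact ⟨.inl ⟨ℓ, by omega⟩, Fin.ext (by simp [oddIdx, h])⟩
  · exact ⟨.inr ⟨ℓ, by omega⟩, Fin.ext (by simp [evenIdx, h])⟩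

def pairedRows (y : Fin (2*k) → Fin n → ℝ) : Matrix (Fin k ⊕ Fin k) (Fin n) ℝ :=
  of fun p => y (Sum.elim oddIdx evenIdx p)

lemma transpose_pairedRows_mul_J_mul_pairedRows (y : Fin (2*k) → Fin n → ℝ) :
    (pairedRows y)ᵀ * J (Fin k) ℝ * pairedRows y = -of (angJ y) := by
  ext α β
  simp [pairedRows, angJ, J, Matrix.mul_apply, Fintype.sum_sum_type, Matrix.one_apply,
    ← sub_eq_add_neg, mul_comm]

lemma pairedRows_mulVec {m : ℕ} (A : Matrix (Fin m) (Fin n) ℝ) (y : Fin (2*k) → Fin n → ℝ) :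
    pairedRows (fun i => A *ᵥ y i) = pairedRows y * Aᵀ := by
  ext p α
  simp [pairedRows, Matrix.mul_apply, mulVec, dotProduct, mul_comm]

lemma angJ_mulVec_eq_zero {m : ℕ} (A : Matrix (Fin m) (Fin n) ℝ) {y : Fin (2*k) → Fin n → ℝ}
    (hy : ∀ α β, angJ y α β = 0) (α β : Fin m) : angJ (fun i => A *ᵥ y i) α β = 0 := by
  have h : -of (angJ fun i => A *ᵥ y i)
      = A * ((pairedRows y)ᵀ * J (Fin k) ℝ * pairedRows y) * Aᵀ := by
    rw [← transpose_pairedRows_mul_J_mul_pairedRows, pairedRows_mulVec]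
    simp only [transpose_mul, transpose_transpose, Matrix.mul_assoc]
  rw [transpose_pairedRows_mul_J_mul_pairedRows, show of (angJ y) = 0 from ext hy, neg_zero,
    Matrix.mul_zero, Matrix.zero_mul, neg_eq_zero] at h
  exact congr_fun₂ h α β

lemma finrank_span_le_of_angJ_eq_zero {y : Fin (2*k) → Fin n → ℝ}
    (hy : ∀ α β, angJ y α β = 0) : finrank ℝ (Submodule.span ℝ (Set.range y)) ≤ k := by
  have hZ : ((pairedRows y)ᵀ * J (Fin k) ℝ) * pairedRows y = 0 := by
    rw [transpose_pairedRows_mul_J_mul_pairedRows, neg_eq_zero]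
    exact ext hy
  have hrank := rank_add_rank_le_card_of_mul_eq_zero hZ
  rw [rank_mul_eq_left_of_isUnit_det _ _ (isUnit_det_J _ _), rank_transpose, Fintype.card_sum,
    Fintype.card_fin, rank_eq_finrank_span_row] at hrank
  have hrows : Set.range (pairedRows y).row = Set.range y :=
    (sum_elim_oddIdx_evenIdx_surjective k).range_comp y
  rw [hrows] at hrank
  omega

lemma exists_angJ_eq_zero_ip_eq {m : ℕ} (hm : k ≤ m) {y : Fin (2*k) → Fin n → ℝ}
    (hy : ∀ α β, angJ y α β = 0) :
    ∃ y' : Fin (2*k) → Fin m → ℝ,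
      (∀ α β, angJ y' α β = 0) ∧ ∀ i j, ip (y' i) (y' j) = ip (y i) (y j) := by
  obtain ⟨T, hT⟩ := exists_linearMap_ip_map_map y ((finrank_span_le_of_angJ_eq_zero hy).trans hm)
  refine ⟨fun i => T (y i), ?_, hT⟩
  simpa only [LinearMap.toMatrix'_mulVec] using angJ_mulVec_eq_zero (LinearMap.toMatrix' T) hy

end AngularMomentum

theorem defining_ideal_independent_of_n_general (k n m : ℕ)
    (hn : k ≤ n) (hm : k ≤ m) :
    {f : MvPolynomial (Fin (2*k) × Fin (2*k)) ℝ |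
      ∀ y : Fin (2*k) → Fin n → ℝ, (∀ α β : Fin n, α < β → angJ y α β = 0) →
        MvPolynomial.eval (fun p => ip (y p.1) (y p.2)) f = 0}
    = {f : MvPolynomial (Fin (2*k) × Fin (2*k)) ℝ |
      ∀ y : Fin (2*k) → Fin m → ℝ, (∀ α β : Fin m, α < β → angJ y α β = 0) →
        MvPolynomial.eval (fun p => ip (y p.1) (y p.2)) f = 0} := by
  have transfer : ∀ {n₁ n₂ : ℕ}, k ≤ n₂ → ∀ f : MvPolynomial (Fin (2*k) × Fin (2*k)) ℝ,
      (∀ y : Fin (2*k) → Fin n₂ → ℝ, (∀ α β : Fin n₂, α < β → angJ y α β = 0) →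
        MvPolynomial.eval (fun p => ip (y p.1) (y p.2)) f = 0) →
      ∀ y : Fin (2*k) → Fin n₁ → ℝ, (∀ α β : Fin n₁, α < β → angJ y α β = 0) →
        MvPolynomial.eval (fun p => ip (y p.1) (y p.2)) f = 0 := by
    intro n₁ n₂ hk f hf y hy
    obtain ⟨y', hy', hgram⟩ := exists_angJ_eq_zero_ip_eq hk (angJ_eq_zero_of_forall_lt hy)
    simpa only [hgram] using hf y' fun α β _ => hy' α β
  ext f
  exact ⟨transfer hn f, transfer hm f⟩

/-- For `n, m ≥ k`, the vanishing ideal (in the polynomial ring on the variables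
`x_{i,j}`) of the image of the zero angular momentum set of `k` particles in `ℝⁿ` under the
Hilbert map `y ↦ (⟨y_i, y_j⟩)_{i,j}` is independent of `n`: the defining ideal of the
symplectic quotient `M_{0,k,n}` is the same for all `n ≥ k`. -/
theorem defining_ideal_independent_of_n (k n m : ℕ) (hk : 1 ≤ k)
    (hn : k ≤ n) (hm : k ≤ m) :
    {f : MvPolynomial (Fin (2*k) × Fin (2*k)) ℝ |
      ∀ y : Fin (2*k) → Fin n → ℝ, (∀ α β : Fin n, α < β → angJ y α β = 0) →
        MvPolynomial.eval (fun p => ip (y p.1) (y p.2)) f = 0}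
    = {f : MvPolynomial (Fin (2*k) × Fin (2*k)) ℝ |
      ∀ y : Fin (2*k) → Fin m → ℝ, (∀ α β : Fin m, α < β → angJ y α β = 0) →
        MvPolynomial.eval (fun p => ip (y p.1) (y p.2)) f = 0} :=
  defining_ideal_independent_of_n_general k n m hn hm
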